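/- Let K¹, K² : [0,T] → ℝ be continuous non-decreasing functions with Kⁱ(0) = 0, y¹, y² : [0,T] → ℝ continuous, u¹, u² : [0,T] → ℝ continuous with yⁱ(t) ≥ uⁱ(t) for all t, and ∫₀ᵀ (yⁱ(t) − uⁱ(t)) dKⁱ(t) = 0 for i = 1,2. Then for every α ≥ 0, ∫₀ᵀ e^{αs}(y¹(s) − y²(s)) d(K¹ − K²)(s) ≤ e^{αT} · (sup_{0≤s≤T} |u¹(s) − u²(s)|) · (K¹(T) + K²(T)). -/

import Mathlib

open MeasureTheory Set Real

lemma aux_flat (T α : ℝ) (K : StieltjesFunction ℝ)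
    (y u : ℝ → ℝ) (hy : ContinuousOn y (Icc 0 T)) (hu : ContinuousOn u (Icc 0 T))
    (hge : ∀ t ∈ Icc 0 T, u t ≤ y t)
    (hflat : ∫ t in Icc 0 T, (y t - u t) ∂K.measure = 0) :
    ∫ s in Icc 0 T, exp (α * s) * (y s - u s) ∂K.measure = 0 := by
  have hmeas : MeasurableSet (Icc (0:ℝ) T) := measurableSet_Icc
  have hint : IntegrableOn (fun t => y t - u t) (Icc 0 T) K.measure :=
    (hy.sub hu).integrableOn_compact isCompact_Icc
  have hnn : 0 ≤ᵐ[K.measure.restrict (Icc 0 T)] fun t => y t - u t := by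
    filter_upwards [ae_restrict_mem hmeas] with t ht
    exact sub_nonneg.2 (hge t ht)
  have h0 : (fun t => y t - u t) =ᵐ[K.measure.restrict (Icc 0 T)] 0 :=
    (integral_eq_zero_iff_of_nonneg_ae hnn hint).1 hflat
  have h0' : (fun s => exp (α * s) * (y s - u s)) =ᵐ[K.measure.restrict (Icc 0 T)] 0 := by
    filter_upwards [h0] with t ht
    simp only [Pi.zero_apply] at ht ⊢
    rw [ht, mul_zero]
  exact integral_eq_zero_of_ae h0'

lemma aux_measure (T : ℝ) (hT : 0 ≤ T) (K : StieltjesFunction ℝ)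
    (hKc : Continuous K) (hK0 : K 0 = 0) :
    (K.measure (Icc 0 T)).toReal = K T := by
  have hl : Function.leftLim K 0 = K 0 :=
    leftLim_eq_of_tendsto
      ((hKc.tendsto 0).mono_left nhdsWithin_le_nhds)
  rw [K.measure_Icc, hl, hK0, sub_zero, ENNReal.toReal_ofReal]
  rw [← hK0]; exact K.mono hT

lemma aux_bound (T α : ℝ) (hT : 0 ≤ T) (hα : 0 ≤ α) (K : StieltjesFunction ℝ)
    (hKc : Continuous K) (hK0 : K 0 = 0)
    (y1 y2 u1 u2 v1 v2 : ℝ → ℝ) (hy1 : ContinuousOn y1 (Icc 0 T))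
    (hy2 : ContinuousOn y2 (Icc 0 T)) (hu1 : ContinuousOn u1 (Icc 0 T))
    (hu2 : ContinuousOn u2 (Icc 0 T)) (hv1 : ContinuousOn v1 (Icc 0 T))
    (hv2 : ContinuousOn v2 (Icc 0 T))
    (hge1 : ∀ t ∈ Icc 0 T, v1 t ≤ y1 t) (hge2 : ∀ t ∈ Icc 0 T, v2 t ≤ y2 t)
    (hflat : ∫ t in Icc 0 T, (y1 t - v1 t) ∂K.measure = 0)
    (hM : ∀ t ∈ Icc 0 T, v1 t - v2 t ≤ ⨆ s : Icc 0 T, |u1 s - u2 s|) :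
    ∫ s in Icc 0 T, exp (α * s) * (y1 s - y2 s) ∂K.measure ≤
      exp (α * T) * (⨆ s : Icc 0 T, |u1 s - u2 s|) * K T := by
  set M := ⨆ s : Icc 0 T, |u1 s - u2 s| with hMdef
  have hMnn : 0 ≤ M := Real.iSup_nonneg fun s => abs_nonneg _
  have hmeas : MeasurableSet (Icc (0:ℝ) T) := measurableSet_Icc
  have he : ContinuousOn (fun s : ℝ => exp (α * s)) (Icc 0 T) :=
    (Real.continuous_exp.comp (continuous_const.mul continuous_id)).continuousOn
  have I1 : IntegrableOn (fun s => exp (α * s) * (y1 s - v1 s)) (Icc 0 T) K.measure :=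
    (he.mul (hy1.sub hv1)).integrableOn_compact isCompact_Icc
  have I2 : IntegrableOn (fun s => exp (α * s) * (v1 s - v2 s)) (Icc 0 T) K.measure :=
    (he.mul (hv1.sub hv2)).integrableOn_compact isCompact_Icc
  have I3 : IntegrableOn (fun s => exp (α * s) * (v2 s - y2 s)) (Icc 0 T) K.measure :=
    (he.mul (hv2.sub hy2)).integrableOn_compact isCompact_Icc
  have ID : IntegrableOn
      (fun s => exp (α * s) * (v1 s - v2 s) + exp (α * s) * (v2 s - y2 s))
      (Icc 0 T) K.measure :=
    (((he.mul (hv1.sub hv2))).add (he.mul (hv2.sub hy2))).integrableOn_compact isCompact_Icc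
  have hsplit2 : ∫ s in Icc 0 T,
        (exp (α * s) * (v1 s - v2 s) + exp (α * s) * (v2 s - y2 s)) ∂K.measure =
      (∫ s in Icc 0 T, exp (α * s) * (v1 s - v2 s) ∂K.measure) +
      (∫ s in Icc 0 T, exp (α * s) * (v2 s - y2 s) ∂K.measure) := integral_add I2 I3
  have hsplit : ∫ s in Icc 0 T, exp (α * s) * (y1 s - y2 s) ∂K.measure =
      (∫ s in Icc 0 T, exp (α * s) * (y1 s - v1 s) ∂K.measure) +
      ((∫ s in Icc 0 T, exp (α * s) * (v1 s - v2 s) ∂K.measure) +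
       (∫ s in Icc 0 T, exp (α * s) * (v2 s - y2 s) ∂K.measure)) := by
    rw [← hsplit2, ← integral_add I1 ID]
    apply setIntegral_congr_fun hmeas
    intro s _
    simp only
    ring
  have h1 : ∫ s in Icc 0 T, exp (α * s) * (y1 s - v1 s) ∂K.measure = 0 :=
    aux_flat T α K y1 v1 hy1 hv1 hge1 hflat
  have h3 : ∫ s in Icc 0 T, exp (α * s) * (v2 s - y2 s) ∂K.measure ≤ 0 := by
    apply setIntegral_nonpos hmeas
    intro s hs
    exact mul_nonpos_of_nonneg_of_nonpos (exp_nonneg _) (sub_nonpos.2 (hge2 s hs))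
  have h2 : ∫ s in Icc 0 T, exp (α * s) * (v1 s - v2 s) ∂K.measure ≤
      exp (α * T) * M * K T := by
    have hconst : IntegrableOn (fun _ : ℝ => exp (α * T) * M) (Icc 0 T) K.measure :=
      integrableOn_const (isCompact_Icc.measure_lt_top.ne)
    calc ∫ s in Icc 0 T, exp (α * s) * (v1 s - v2 s) ∂K.measure
        ≤ ∫ _ in Icc 0 T, exp (α * T) * M ∂K.measure := by
          apply setIntegral_mono_on I2 hconst hmeas
          intro s hs
          have h1 : exp (α * s) * (v1 s - v2 s) ≤ exp (α * s) * M :=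
            mul_le_mul_of_nonneg_left (hM s hs) (exp_nonneg _)
          have h2 : exp (α * s) * M ≤ exp (α * T) * M :=
            mul_le_mul_of_nonneg_right
              (exp_le_exp.2 (mul_le_mul_of_nonneg_left hs.2 hα)) hMnn
          exact h1.trans h2
      _ = (K.measure (Icc 0 T)).toReal * (exp (α * T) * M) := by
          rw [setIntegral_const]; rfl
      _ = exp (α * T) * M * K T := by
          rw [aux_measure T hT K hKc hK0]; ring
  rw [hsplit, h1, zero_add]
  calc _ ≤ (exp (α * T) * M * K T) + 0 := add_le_add h2 h3
    _ = _ := add_zero _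

theorem stmt_10 (T : ℝ) (hT : 0 ≤ T) (K1 K2 : StieltjesFunction ℝ)
    (hK1c : Continuous K1) (hK2c : Continuous K2)
    (hK10 : K1 0 = 0) (hK20 : K2 0 = 0)
    (y1 y2 u1 u2 : ℝ → ℝ) (hy1 : ContinuousOn y1 (Icc 0 T))
    (hy2 : ContinuousOn y2 (Icc 0 T)) (hu1 : ContinuousOn u1 (Icc 0 T))
    (hu2 : ContinuousOn u2 (Icc 0 T))
    (hge1 : ∀ t ∈ Icc 0 T, u1 t ≤ y1 t) (hge2 : ∀ t ∈ Icc 0 T, u2 t ≤ y2 t)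
    (hflat1 : ∫ t in Icc 0 T, (y1 t - u1 t) ∂K1.measure = 0)
    (hflat2 : ∫ t in Icc 0 T, (y2 t - u2 t) ∂K2.measure = 0) :
    ∀ α : ℝ, 0 ≤ α →
      (∫ s in Icc 0 T, exp (α * s) * (y1 s - y2 s) ∂K1.measure) -
          (∫ s in Icc 0 T, exp (α * s) * (y1 s - y2 s) ∂K2.measure) ≤
        exp (α * T) * (⨆ s : Icc 0 T, |u1 s - u2 s|) * (K1 T + K2 T) := by
  intro α hα
  have hBdd : BddAbove (Set.range fun s : Icc 0 T => |u1 s - u2 s|) := by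
    have : Continuous fun s : Icc 0 T => |u1 s - u2 s| :=
      ((hu1.restrict.sub hu2.restrict).abs)
    exact (isCompact_range this).bddAbove
  have hM1 : ∀ t ∈ Icc 0 T, u1 t - u2 t ≤ ⨆ s : Icc 0 T, |u1 s - u2 s| := fun t ht =>
    le_trans (le_abs_self _) (le_ciSup hBdd ⟨t, ht⟩)
  have hM2 : ∀ t ∈ Icc 0 T, u2 t - u1 t ≤ ⨆ s : Icc 0 T, |u1 s - u2 s| := fun t ht =>
    le_trans (le_trans (le_abs_self _) (abs_sub_comm _ _).le) (le_ciSup hBdd ⟨t, ht⟩)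
  have hA := aux_bound T α hT hα K1 hK1c hK10 y1 y2 u1 u2 u1 u2 hy1 hy2 hu1 hu2 hu1 hu2
    hge1 hge2 hflat1 hM1
  have hB := aux_bound T α hT hα K2 hK2c hK20 y2 y1 u1 u2 u2 u1 hy2 hy1 hu1 hu2 hu2 hu1
    hge2 hge1 hflat2 hM2
  have hneg : (∫ s in Icc 0 T, exp (α * s) * (y2 s - y1 s) ∂K2.measure) =
      -(∫ s in Icc 0 T, exp (α * s) * (y1 s - y2 s) ∂K2.measure) := by
    rw [← integral_neg]
    congr 1; funext s; ring
  rw [hneg] at hB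
  linarith
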